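/- arXiv:1411.2300 — 2 statements merged into one kernel-verified Lean document; each statement's English description precedes it below -/
import Mathlib

section
/- An automorphism φ of the combinatorics K satisfies φ(5) = 6 and φ(6) = 5 if and only if φ = (1 3 2 4)(5 6)(7 9 10 8) or φ = (4 2 3 1)(5 6)(8 10 9 7); that is, φ is σ or σ⁻¹ where σ = (1 3 2 4)(5 6)(7 9 10 8). -/
open Finset

/-- The point set `P` of the combinatorics `K` on the line set `{1,…,11}`. -/
def Kpoints : Finset (Finset ℕ) :=
  { {1,2}, {1,3,5,7}, {1,4,6,8}, {1,9}, {1,10,11}, {2,3,6,9}, {2,4,5,10},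
    {2,7,11}, {2,8}, {3,4}, {3,8,11}, {3,10}, {4,7}, {4,9,11}, {5,6},
    {5,8,9}, {5,11}, {6,7,10}, {6,11}, {7,8}, {7,9}, {8,10}, {9,10} }

/-- An automorphism of `K`: a permutation of `{1,…,11}` (viewed as a permutation of `ℕ`
fixing everything outside `{1,…,11}`) sending every member of `P` to a member of `P`. -/
def IsAutoK (φ : Equiv.Perm ℕ) : Prop :=
  (∀ n : ℕ, n ∉ Finset.Icc 1 11 → φ n = n) ∧
  ∀ S ∈ Kpoints, S.image φ ∈ Kpoints

/-- The permutation `σ = (1 3 2 4)(5 6)(7 9 10 8)`. -/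
def sigmaK : Equiv.Perm ℕ :=
  ([1,3,2,4] : List ℕ).formPerm * ([5,6] : List ℕ).formPerm *
    ([7,9,10,8] : List ℕ).formPerm

/-- The permutation `(4 2 3 1)(5 6)(8 10 9 7)`. -/
def sigmaK' : Equiv.Perm ℕ :=
  ([4,2,3,1] : List ℕ).formPerm * ([5,6] : List ℕ).formPerm *
    ([8,10,9,7] : List ℕ).formPerm

lemma sigmaK_fix : ∀ n : ℕ, n ∉ Finset.Icc 1 11 → sigmaK n = n := by
  intro n hn
  simp only [Finset.mem_Icc, not_and, not_le] at hn
  have f1 : ([7,9,10,8] : List ℕ).formPerm n = n :=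
    List.formPerm_apply_of_notMem (by simp; omega)
  have f2 : ([5,6] : List ℕ).formPerm n = n :=
    List.formPerm_apply_of_notMem (by simp; omega)
  have f3 : ([1,3,2,4] : List ℕ).formPerm n = n :=
    List.formPerm_apply_of_notMem (by simp; omega)
  show ([1,3,2,4] : List ℕ).formPerm (([5,6] : List ℕ).formPerm
    (([7,9,10,8] : List ℕ).formPerm n)) = n
  rw [f1, f2, f3]

lemma sigmaK'_fix : ∀ n : ℕ, n ∉ Finset.Icc 1 11 → sigmaK' n = n := by
  intro n hn
  simp only [Finset.mem_Icc, not_and, not_le] at hn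
  have f1 : ([8,10,9,7] : List ℕ).formPerm n = n :=
    List.formPerm_apply_of_notMem (by simp; omega)
  have f2 : ([5,6] : List ℕ).formPerm n = n :=
    List.formPerm_apply_of_notMem (by simp; omega)
  have f3 : ([4,2,3,1] : List ℕ).formPerm n = n :=
    List.formPerm_apply_of_notMem (by simp; omega)
  show ([4,2,3,1] : List ℕ).formPerm (([5,6] : List ℕ).formPerm
    (([8,10,9,7] : List ℕ).formPerm n)) = n
  rw [f1, f2, f3]

/-- An automorphism `φ` of `K` satisfies `φ 5 = 6` and `φ 6 = 5` iff
`φ = (1 3 2 4)(5 6)(7 9 10 8)` or `φ = (4 2 3 1)(5 6)(8 10 9 7)`, i.e. `φ` is `σ` or `σ⁻¹`. -/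
theorem stmt5 :
    (∀ φ : Equiv.Perm ℕ, IsAutoK φ →
      ((φ 5 = 6 ∧ φ 6 = 5) ↔ (φ = sigmaK ∨ φ = sigmaK'))) ∧
    sigmaK' = sigmaK⁻¹ := by
  constructor
  · intro φ hA
    constructor
    · rintro ⟨h5, h6⟩
      have hrange : ∀ n, n ∈ Finset.Icc 1 11 → φ n ∈ Finset.range 12 := by
        intro n hn
        simp only [Finset.mem_Icc] at hn
        rw [Finset.mem_range]
        by_contra h
        push_neg at h
        have h' : φ n ∉ Finset.Icc 1 11 := by simp only [Finset.mem_Icc]; omega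
        have h2 := φ.injective (hA.1 (φ n) h')
        omega
      have hne : ∀ i j : ℕ, i ≠ j → φ i ≠ φ j := fun i j h e => h (φ.injective e)
      -- φ 11 = 11
      have h1 := hA.2 {5,11} (by decide)
      simp only [Finset.image_insert, Finset.image_singleton, h5] at h1
      have e11 : φ 11 = 11 := by
        have L : ∀ x ∈ Finset.range 12, ({6, x} : Finset ℕ) ∈ Kpoints → x ≠ 5 → x = 11 := by
          decide
        exact L _ (hrange 11 (by decide)) h1
          (fun e => hne 11 6 (by omega) (e.trans h6.symm))
      -- (φ 8, φ 9) is (7,10) or (10,7)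
      have h2 := hA.2 {5,8,9} (by decide)
      simp only [Finset.image_insert, Finset.image_singleton, h5] at h2
      have p89 : (φ 8 = 7 ∧ φ 9 = 10) ∨ (φ 8 = 10 ∧ φ 9 = 7) := by
        have L : ∀ x ∈ Finset.range 12, ∀ y ∈ Finset.range 12,
            ({6, x, y} : Finset ℕ) ∈ Kpoints → x ≠ y → x ≠ 5 → x ≠ 6 →
            y ≠ 5 → y ≠ 6 → y ≠ 11 → (x = 7 ∧ y = 10) ∨ (x = 10 ∧ y = 7) := by decide
        exact L _ (hrange 8 (by decide)) _ (hrange 9 (by decide)) h2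
          (hne 8 9 (by omega))
          (fun e => hne 8 6 (by omega) (e.trans h6.symm))
          (fun e => hne 8 5 (by omega) (e.trans h5.symm))
          (fun e => hne 9 6 (by omega) (e.trans h6.symm))
          (fun e => hne 9 5 (by omega) (e.trans h5.symm))
          (fun e => hne 9 11 (by omega) (e.trans e11.symm))
      -- (φ 7, φ 10) is (8,9) or (9,8)
      have h3 := hA.2 {6,7,10} (by decide)
      simp only [Finset.image_insert, Finset.image_singleton, h6] at h3
      have p710 : (φ 7 = 8 ∧ φ 10 = 9) ∨ (φ 7 = 9 ∧ φ 10 = 8) := by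
        have L : ∀ x ∈ Finset.range 12, ∀ y ∈ Finset.range 12,
            ({5, x, y} : Finset ℕ) ∈ Kpoints → x ≠ y → x ≠ 5 → x ≠ 6 →
            y ≠ 5 → y ≠ 6 → y ≠ 11 → (x = 8 ∧ y = 9) ∨ (x = 9 ∧ y = 8) := by decide
        exact L _ (hrange 7 (by decide)) _ (hrange 10 (by decide)) h3
          (hne 7 10 (by omega))
          (fun e => hne 7 6 (by omega) (e.trans h6.symm))
          (fun e => hne 7 5 (by omega) (e.trans h5.symm))
          (fun e => hne 10 6 (by omega) (e.trans h6.symm))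
          (fun e => hne 10 5 (by omega) (e.trans h5.symm))
          (fun e => hne 10 11 (by omega) (e.trans e11.symm))
      rcases p710 with ⟨e7, e10⟩ | ⟨e7, e10⟩
      · -- φ 7 = 8, φ 10 = 9 : this leads to sigmaK'
        have h4 := hA.2 {1,10,11} (by decide)
        simp only [Finset.image_insert, Finset.image_singleton, e10, e11] at h4
        have e1 : φ 1 = 4 := by
          have L : ∀ x ∈ Finset.range 12, ({x, 9, 11} : Finset ℕ) ∈ Kpoints →
              x ≠ 9 → x ≠ 11 → x = 4 := by decide
          exact L _ (hrange 1 (by decide)) h4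
            (fun e => hne 1 10 (by omega) (e.trans e10.symm))
            (fun e => hne 1 11 (by omega) (e.trans e11.symm))
        have h5' := hA.2 {1,9} (by decide)
        simp only [Finset.image_insert, Finset.image_singleton, e1] at h5'
        rcases p89 with ⟨e8, e9⟩ | ⟨e8, e9⟩
        · -- φ 9 = 10 : {4,10} ∉ Kpoints, contradiction
          rw [e9] at h5'
          exact absurd h5' (by decide)
        · -- φ 8 = 10, φ 9 = 7
          have h6' := hA.2 {1,2} (by decide)
          simp only [Finset.image_insert, Finset.image_singleton, e1] at h6'
          have e2 : φ 2 = 3 := by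
            have L : ∀ x ∈ Finset.range 12, ({4, x} : Finset ℕ) ∈ Kpoints →
                x ≠ 4 → x ≠ 7 → x = 3 := by decide
            exact L _ (hrange 2 (by decide)) h6'
              (fun e => hne 2 1 (by omega) (e.trans e1.symm))
              (fun e => hne 2 9 (by omega) (e.trans e9.symm))
          have h7 := hA.2 {3,10} (by decide)
          simp only [Finset.image_insert, Finset.image_singleton, e10] at h7
          have e3 : φ 3 = 1 := by
            have L : ∀ x ∈ Finset.range 12, ({x, 9} : Finset ℕ) ∈ Kpoints →
                x ≠ 9 → x ≠ 7 → x ≠ 10 → x = 1 := by decide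
            exact L _ (hrange 3 (by decide)) h7
              (fun e => hne 3 10 (by omega) (e.trans e10.symm))
              (fun e => hne 3 9 (by omega) (e.trans e9.symm))
              (fun e => hne 3 8 (by omega) (e.trans e8.symm))
          have h8 := hA.2 {3,4} (by decide)
          simp only [Finset.image_insert, Finset.image_singleton, e3] at h8
          have e4 : φ 4 = 2 := by
            have L : ∀ x ∈ Finset.range 12, ({1, x} : Finset ℕ) ∈ Kpoints →
                x ≠ 1 → x ≠ 9 → x = 2 := by decide
            exact L _ (hrange 4 (by decide)) h8
              (fun e => hne 4 3 (by omega) (e.trans e3.symm))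
              (fun e => hne 4 10 (by omega) (e.trans e10.symm))
          right
          apply Equiv.ext
          intro n
          by_cases hn : n ∈ Finset.Icc 1 11
          · simp only [Finset.mem_Icc] at hn
            obtain ⟨hn1, hn2⟩ := hn
            interval_cases n <;>
              simp only [e1, e2, e3, e4, h5, h6, e7, e8, e9, e10, e11] <;> decide
          · rw [hA.1 n hn]
            exact (sigmaK'_fix n hn).symm
      · -- φ 7 = 9, φ 10 = 8 : this leads to sigmaK
        have h4 := hA.2 {1,10,11} (by decide)
        simp only [Finset.image_insert, Finset.image_singleton, e10, e11] at h4
        have e1 : φ 1 = 3 := by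
          have L : ∀ x ∈ Finset.range 12, ({x, 8, 11} : Finset ℕ) ∈ Kpoints →
              x ≠ 8 → x ≠ 11 → x = 3 := by decide
          exact L _ (hrange 1 (by decide)) h4
            (fun e => hne 1 10 (by omega) (e.trans e10.symm))
            (fun e => hne 1 11 (by omega) (e.trans e11.symm))
        have h5' := hA.2 {1,9} (by decide)
        simp only [Finset.image_insert, Finset.image_singleton, e1] at h5'
        rcases p89 with ⟨e8, e9⟩ | ⟨e8, e9⟩
        · -- φ 8 = 7, φ 9 = 10
          have h6' := hA.2 {1,2} (by decide)
          simp only [Finset.image_insert, Finset.image_singleton, e1] at h6'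
          have e2 : φ 2 = 4 := by
            have L : ∀ x ∈ Finset.range 12, ({3, x} : Finset ℕ) ∈ Kpoints →
                x ≠ 3 → x ≠ 10 → x = 4 := by decide
            exact L _ (hrange 2 (by decide)) h6'
              (fun e => hne 2 1 (by omega) (e.trans e1.symm))
              (fun e => hne 2 9 (by omega) (e.trans e9.symm))
          have h7 := hA.2 {3,10} (by decide)
          simp only [Finset.image_insert, Finset.image_singleton, e10] at h7
          have e3 : φ 3 = 2 := by
            have L : ∀ x ∈ Finset.range 12, ({x, 8} : Finset ℕ) ∈ Kpoints →
                x ≠ 8 → x ≠ 7 → x ≠ 10 → x = 2 := by decide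
            exact L _ (hrange 3 (by decide)) h7
              (fun e => hne 3 10 (by omega) (e.trans e10.symm))
              (fun e => hne 3 8 (by omega) (e.trans e8.symm))
              (fun e => hne 3 9 (by omega) (e.trans e9.symm))
          have h8 := hA.2 {3,4} (by decide)
          simp only [Finset.image_insert, Finset.image_singleton, e3] at h8
          have e4 : φ 4 = 1 := by
            have L : ∀ x ∈ Finset.range 12, ({2, x} : Finset ℕ) ∈ Kpoints →
                x ≠ 2 → x ≠ 8 → x = 1 := by decide
            exact L _ (hrange 4 (by decide)) h8
              (fun e => hne 4 3 (by omega) (e.trans e3.symm))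
              (fun e => hne 4 10 (by omega) (e.trans e10.symm))
          left
          apply Equiv.ext
          intro n
          by_cases hn : n ∈ Finset.Icc 1 11
          · simp only [Finset.mem_Icc] at hn
            obtain ⟨hn1, hn2⟩ := hn
            interval_cases n <;>
              simp only [e1, e2, e3, e4, h5, h6, e7, e8, e9, e10, e11] <;> decide
          · rw [hA.1 n hn]
            exact (sigmaK_fix n hn).symm
        · -- φ 9 = 7 : {3,7} ∉ Kpoints, contradiction
          rw [e9] at h5'
          exact absurd h5' (by decide)
    · rintro (rfl | rfl)
      · exact ⟨by decide, by decide⟩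
      · exact ⟨by decide, by decide⟩
  · have hmul : sigmaK' * sigmaK = 1 := by
      apply Equiv.ext
      intro n
      by_cases hn : n ∈ Finset.Icc 1 11
      · simp only [Finset.mem_Icc] at hn
        obtain ⟨hn1, hn2⟩ := hn
        simp only [Equiv.Perm.mul_apply, Equiv.Perm.one_apply]
        interval_cases n <;> decide
      · simp only [Equiv.Perm.mul_apply, Equiv.Perm.one_apply]
        rw [sigmaK_fix n hn, sigmaK'_fix n hn]
    exact eq_inv_of_mul_eq_one_left hmul
end

section
/- Under the action of the automorphism group of K (the cyclic group generated by σ = (1 3 2 4)(5 6)(7 9 10 8)), the set {1,…,11} decomposes into exactly the four orbits {1,2,3,4}, {5,6}, {7,8,9,10}, {11}, and the induced action on the point set P (where φ acts by S ↦ φ(S)) has exactly 8 orbits. -/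
/-!
`σ` is a product of disjoint cycles of lengths 4, 2, 4, so `σ ^ 4 = 1` and every `⟨σ⟩`-orbit is
`{σ ^ i x | i < 4}`; both claims thus become finite computations. For the points, `Kreps` picks one
point from each of the 8 orbits, and the orbit of every point of `P` meets `Kreps` exactly once.
-/

open Finset

section PowEqOne

variable {G β : Type*} [Group G] {g : G} {n : ℕ}

lemma exists_lt_zpow_eq_pow (hn : 0 < n) (h : g ^ n = 1) (k : ℤ) : ∃ i < n, g ^ k = g ^ i := by
  have hnonneg : 0 ≤ k % n := Int.emod_nonneg k (by omega)
  have hlt : k % n < n := Int.emod_lt_of_pos k (by omega)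
  refine ⟨(k % n).toNat, by omega, ?_⟩
  rw [zpow_eq_zpow_emod' k h, ← zpow_natCast, Int.toNat_of_nonneg hnonneg]

lemma range_zpow_comp_eq_image_range [DecidableEq β] (hn : 0 < n) (h : g ^ n = 1) (f : G → β) :
    Set.range (fun k : ℤ => f (g ^ k)) = ↑((range n).image fun i => f (g ^ i)) := by
  ext y
  simp only [Set.mem_range, coe_image, coe_range, Set.mem_image, Set.mem_Iio]
  constructor
  · rintro ⟨k, rfl⟩
    obtain ⟨i, hi, hk⟩ := exists_lt_zpow_eq_pow hn h k
    exact ⟨i, hi, by rw [hk]⟩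
  · rintro ⟨i, -, rfl⟩
    exact ⟨i, by rw [zpow_natCast]⟩

end PowEqOne

lemma sigmaK_apply_of_ten_lt (x : ℕ) (hx : 10 < x) : sigmaK x = x := by
  simp only [sigmaK, Equiv.Perm.mul_apply]
  rw [List.formPerm_apply_of_notMem (l := [7,9,10,8]) (by simp; omega),
    List.formPerm_apply_of_notMem (l := [5,6]) (by simp; omega),
    List.formPerm_apply_of_notMem (l := [1,3,2,4]) (by simp; omega)]

set_option maxRecDepth 10000 in
lemma sigmaK_pow_four : sigmaK ^ 4 = 1 := by
  ext x
  rcases Nat.lt_or_ge 10 x with hx | hx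
  · exact Equiv.Perm.pow_apply_eq_self_of_apply_eq_self (sigmaK_apply_of_ten_lt x hx) 4
  · revert x; decide

lemma range_sigmaK_zpow_comp {β : Type*} [DecidableEq β] (f : Equiv.Perm ℕ → β) :
    Set.range (fun k : ℤ => f (sigmaK ^ k)) = ↑((range 4).image fun i => f (sigmaK ^ i)) :=
  range_zpow_comp_eq_image_range (by norm_num) sigmaK_pow_four f

def Kreps : Finset (Finset ℕ) :=
  { {1,2}, {1,3,5,7}, {1,9}, {1,10,11}, {5,6}, {5,8,9}, {5,11}, {7,8} }

lemma card_Kreps_inter_orbit :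
    ∀ S ∈ Kpoints, #(Kreps ∩ (range 4).image fun i => S.image ⇑(sigmaK ^ i)) = 1 := by
  decide

/-- Under the cyclic group generated by `σ`, the set `{1,…,11}` decomposes into exactly the
four orbits `{1,2,3,4}`, `{5,6}`, `{7,8,9,10}`, `{11}`, and the induced action on the point
set `P` (by `S ↦ φ(S)`) has exactly 8 orbits. -/
theorem stmt6 :
    ({x : ℕ | ∃ k : ℤ, (sigmaK ^ k) 1 = x} = ({1, 2, 3, 4} : Set ℕ)) ∧
    ({x : ℕ | ∃ k : ℤ, (sigmaK ^ k) 5 = x} = ({5, 6} : Set ℕ)) ∧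
    ({x : ℕ | ∃ k : ℤ, (sigmaK ^ k) 7 = x} = ({7, 8, 9, 10} : Set ℕ)) ∧
    ({x : ℕ | ∃ k : ℤ, (sigmaK ^ k) 11 = x} = ({11} : Set ℕ)) ∧
    (∃ R : Finset (Finset ℕ), R ⊆ Kpoints ∧ R.card = 8 ∧
      ∀ S ∈ Kpoints, ∃! T, T ∈ R ∧ ∃ k : ℤ, S.image ⇑(sigmaK ^ k) = T) := by
  have orbit (x : ℕ) :
      {y | ∃ k : ℤ, (sigmaK ^ k) x = y} = ↑((range 4).image fun i => (sigmaK ^ i) x) :=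
    range_sigmaK_zpow_comp fun τ => τ x
  refine ⟨?_, ?_, ?_, ?_, Kreps, by decide, by decide, fun S hS => ?_⟩
  · rw [orbit, show (range 4).image (fun i => (sigmaK ^ i) 1) = {1, 2, 3, 4} by decide]; simp
  · rw [orbit, show (range 4).image (fun i => (sigmaK ^ i) 5) = {5, 6} by decide]; simp
  · rw [orbit, show (range 4).image (fun i => (sigmaK ^ i) 7) = {7, 8, 9, 10} by decide]; simp
  · rw [orbit, show (range 4).image (fun i => (sigmaK ^ i) 11) = {11} by decide]; simp
  · have mem_orbit (T : Finset ℕ) : (∃ k : ℤ, S.image ⇑(sigmaK ^ k) = T) ↔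
        T ∈ (range 4).image fun i => S.image ⇑(sigmaK ^ i) := by
      rw [← mem_coe, ← range_sigmaK_zpow_comp fun τ => S.image ⇑τ]; rfl
    simp only [mem_orbit, ← mem_inter, ← card_eq_one_iff_existsUnique]
    exact card_Kreps_inter_orbit S hS
end
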